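/- Under Assumptions 1 and 2, the randomized incremental subgradient iterate x_{k+1} = P_X(x_k - v_k g_{k,ω_k}), where ω_k is uniform on I_k = {i : f_i(x_k) > f_i*} and g_{k,ω_k} is a unit quasi-subgradient of f_{ω_k} at x_k, satisfies for every common minimizer x*: E[‖x_{k+1} - x*‖² | F_k] ≤ ‖x_k - x*‖² - 2 v_k (R_{p,m}/m) (f(x_k) - f*)^{1/p} + v_k², where R_{p,m} = L_max^{-1/p} min{1, m^{1-1/p}} and F_k = σ(x_0,...,x_k). -/

import Mathlib

/-!
For an active index `i`, projecting onto `X` does not increase the distance to `x*`, so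
`‖x_{k+1} - x*‖² ≤ ‖x_k - x*‖² - 2 v ⟪g, x_k - x*⟫ + v²`. The quasi-subgradient inequality and
Hölder continuity at `x*` give `⟪g, x_k - x*⟫ ≥ ((f_i(x_k) - f_i*) / L)^{1/p}`: if not, the point
`x* + t g` with `⟪g, x_k - x*⟫ < t < ((f_i(x_k) - f_i*) / L)^{1/p}` lies strictly on the positive
side of the hyperplane through `x_k` and still has `f_i < f_i(x_k)`. Averaging over `I` and
comparing `∑ dᵢ^{1/p}` with `(∑ dᵢ)^{1/p}` (subadditivity for `p ≥ 1`, the power mean inequality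
for `p ≤ 1`, together with `|I| ≤ m`) produces the constant `R_{p,m} / m`.
-/

open Finset RealInnerProductSpace

theorem Real.rpow_sum_le_sum_rpow {ι : Type*} {s : Finset ι} {d : ι → ℝ} {q : ℝ}
    (hq : 0 < q) (hq1 : q ≤ 1) (hd : ∀ i ∈ s, 0 ≤ d i) :
    (∑ i ∈ s, d i) ^ q ≤ ∑ i ∈ s, d i ^ q :=
  le_sum_of_subadditive_on_pred (· ^ q) (0 ≤ ·) (Real.zero_rpow hq.ne').le
    (fun _ _ hx hy => Real.rpow_add_le_add_rpow hx hy hq.le hq1) (fun _ _ => add_nonneg) d hd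

theorem card_div_mul_min_mul_rpow_sum_le_sum_rpow {ι : Type*} {s : Finset ι} {d : ι → ℝ}
    {q m : ℝ} (hq : 0 < q) (hd : ∀ i ∈ s, 0 ≤ d i) (hsm : (#s : ℝ) ≤ m) :
    #s / m * min 1 (m ^ (1 - q)) * (∑ i ∈ s, d i) ^ q ≤ ∑ i ∈ s, d i ^ q := by
  rcases s.eq_empty_or_nonempty with rfl | hs
  · simp
  have hk : (0 : ℝ) < #s := by exact_mod_cast hs.card_pos
  have hm : 0 < m := hk.trans_le hsm
  have hD : 0 ≤ (∑ i ∈ s, d i) ^ q := Real.rpow_nonneg (sum_nonneg hd) q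
  rcases le_total q 1 with hq1 | hq1
  · have hcoef : #s / m * min 1 (m ^ (1 - q)) ≤ 1 :=
      mul_le_one₀ ((div_le_one hm).2 hsm) (le_min zero_le_one (by positivity)) (min_le_left _ _)
    calc #s / m * min 1 (m ^ (1 - q)) * (∑ i ∈ s, d i) ^ q ≤ (∑ i ∈ s, d i) ^ q :=
          mul_le_of_le_one_left hD hcoef
      _ ≤ ∑ i ∈ s, d i ^ q := Real.rpow_sum_le_sum_rpow hq hq1 hd
  · have hcoef : #s / m * min 1 (m ^ (1 - q)) ≤ (#s : ℝ) ^ (1 - q) :=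
      calc #s / m * min 1 (m ^ (1 - q)) ≤ #s / m * m ^ (1 - q) := by gcongr; exact min_le_right _ _
        _ = #s * m ^ (-q) := by
          rw [Real.rpow_sub hm, Real.rpow_one, Real.rpow_neg hm.le]; field_simp
        _ ≤ #s * (#s : ℝ) ^ (-q) :=
          mul_le_mul_of_nonneg_left (Real.rpow_le_rpow_of_nonpos hk hsm (by linarith)) hk.le
        _ = (#s : ℝ) ^ (1 - q) := by
          rw [Real.rpow_sub hk, Real.rpow_one, Real.rpow_neg hk.le]; field_simp
    calc #s / m * min 1 (m ^ (1 - q)) * (∑ i ∈ s, d i) ^ q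
        ≤ (#s : ℝ) ^ (1 - q) * ((#s : ℝ) ^ (q - 1) * ∑ i ∈ s, d i ^ q) := by
          gcongr
          exact Real.rpow_sum_le_const_mul_sum_rpow_of_nonneg s hq1 hd
      _ = ∑ i ∈ s, d i ^ q := by
          rw [← mul_assoc, ← Real.rpow_add hk]; simp

section InnerProductSpace

variable {F : Type*} [NormedAddCommGroup F] [InnerProductSpace ℝ F]

theorem norm_sub_le_of_forall_norm_sub_le {K : Set F} (hK : Convex ℝ K) {u v w : F}
    (hv : v ∈ K) (hmin : ∀ w ∈ K, ‖v - u‖ ≤ ‖w - u‖) (hw : w ∈ K) : ‖v - w‖ ≤ ‖u - w‖ := by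
  have : Nonempty K := ⟨⟨v, hv⟩⟩
  have hbdd : BddBelow (Set.range fun w : K => ‖u - w‖) :=
    ⟨0, by rintro _ ⟨w, rfl⟩; exact norm_nonneg _⟩
  have hinf : ‖u - v‖ = ⨅ w : K, ‖u - w‖ :=
    le_antisymm (le_ciInf fun w => by simpa only [norm_sub_rev u] using hmin w w.2)
      (ciInf_le hbdd ⟨v, hv⟩)
  have hobtuse : ⟪u - v, w - v⟫ ≤ 0 := (norm_eq_iInf_iff_real_inner_le_zero hK hv).1 hinf w hw
  have hsq : ‖u - w‖ ^ 2 = ‖u - v‖ ^ 2 - 2 * ⟪u - v, w - v⟫ + ‖w - v‖ ^ 2 := by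
    rw [← norm_sub_sq_real]; congr 2; abel
  rw [norm_sub_rev v w]
  exact (pow_le_pow_iff_left₀ (norm_nonneg _) (norm_nonneg _) two_ne_zero).1
    (by linarith [sq_nonneg ‖u - v‖])

theorem norm_sub_sq_le_of_nearest_point_sub_smul {K : Set F} (hK : Convex ℝ K) {x xs g y : F}
    {v : ℝ} (hxs : xs ∈ K) (hy : y ∈ K) (hmin : ∀ w ∈ K, ‖y - (x - v • g)‖ ≤ ‖w - (x - v • g)‖)
    (hg : ‖g‖ = 1) :
    ‖y - xs‖ ^ 2 ≤ ‖x - xs‖ ^ 2 - 2 * v * ⟪g, x - xs⟫ + v ^ 2 :=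
  calc ‖y - xs‖ ^ 2 ≤ ‖x - v • g - xs‖ ^ 2 := by
        gcongr; exact norm_sub_le_of_forall_norm_sub_le hK hy hmin hxs
    _ = ‖x - xs‖ ^ 2 - 2 * v * ⟪g, x - xs⟫ + v ^ 2 := by
        rw [show x - v • g - xs = (x - xs) - v • g by abel, norm_sub_sq_real, real_inner_smul_right,
          real_inner_comm, norm_smul, hg, mul_one, Real.norm_eq_abs, sq_abs]; ring

def IsQuasiSubgradient (f : F → ℝ) (x g : F) : Prop :=
  ∀ y, f y < f x → ⟪g, y - x⟫ ≤ 0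

theorem IsQuasiSubgradient.rpow_le_inner {f : F → ℝ} {x xs g : F} {L p : ℝ}
    (hg : IsQuasiSubgradient f x g) (hunit : ‖g‖ = 1) (hL : 0 < L) (hp : 0 < p)
    (hHolder : ∀ y, f y - f xs ≤ L * ‖y - xs‖ ^ p) (hlt : f xs < f x) :
    L ^ (-(1 / p)) * (f x - f xs) ^ (1 / p) ≤ ⟪g, x - xs⟫ := by
  set r := L ^ (-(1 / p)) * (f x - f xs) ^ (1 / p)
  have hd : 0 < f x - f xs := sub_pos.2 hlt
  have hr : 0 < r := by positivity
  have hLr : L * r ^ p = f x - f xs := by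
    rw [Real.mul_rpow (by positivity) (by positivity), ← Real.rpow_mul hL.le, ← Real.rpow_mul hd.le,
      neg_mul, one_div_mul_cancel hp.ne', Real.rpow_neg_one, Real.rpow_one, ← mul_assoc,
      mul_inv_cancel₀ hL.ne', one_mul]
  by_contra! hlt
  obtain ⟨t, hts, htr⟩ := exists_between (max_lt hlt hr)
  obtain ⟨het, ht⟩ := max_lt_iff.1 hts
  have hnorm : ‖xs + t • g - xs‖ = t := by
    rw [add_sub_cancel_left, norm_smul, hunit, mul_one, Real.norm_of_nonneg ht.le]
  have hfy : f (xs + t • g) < f x := by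
    have := hHolder (xs + t • g)
    rw [hnorm] at this
    have : L * t ^ p < L * r ^ p := by gcongr
    linarith
  have hinner : ⟪g, xs + t • g - x⟫ = t - ⟪g, x - xs⟫ := by
    rw [show xs + t • g - x = t • g - (x - xs) by abel, inner_sub_right, real_inner_smul_right,
      real_inner_self_eq_norm_sq, hunit]; ring
  have := hg _ hfy
  linarith

end InnerProductSpace

/-- The uniform average over `I` is the conditional expectation `E[‖x_{k+1} - x*‖² | F_k]`. -/
theorem stmt15_general {n m : ℕ}
    (f : Fin m → EuclideanSpace ℝ (Fin n) → ℝ)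
    (X : Set (EuclideanSpace ℝ (Fin n)))
    (hXconv : Convex ℝ X)
    (p Lmax : ℝ) (hp : 0 < p) (hL : 0 < Lmax)
    (hHolder : ∀ i, ∀ x ∈ X, ∀ y, |f i y - f i x| ≤ Lmax * ‖y - x‖ ^ p)
    (xstar : EuclideanSpace ℝ (Fin n)) (hxsX : xstar ∈ X)
    (hmin : ∀ i, ∀ y ∈ X, f i xstar ≤ f i y)
    (xk : EuclideanSpace ℝ (Fin n)) (hxk : xk ∈ X)
    (v : ℝ) (hv : 0 < v)
    (I : Finset (Fin m))
    (hIdef : I = Finset.univ.filter fun i => f i xstar < f i xk)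
    (hIne : I.Nonempty)
    (g : Fin m → EuclideanSpace ℝ (Fin n)) (hg : ∀ i ∈ I, ‖g i‖ = 1)
    (hgsub : ∀ i ∈ I, ∀ y, f i y < f i xk → (inner ℝ (g i) (y - xk) : ℝ) ≤ 0)
    (next : Fin m → EuclideanSpace ℝ (Fin n))
    (hnext : ∀ i ∈ I, next i ∈ X ∧
      ∀ w ∈ X, ‖next i - (xk - v • g i)‖ ≤ ‖w - (xk - v • g i)‖) :
    (1 / (I.card : ℝ)) * ∑ i ∈ I, ‖next i - xstar‖ ^ 2 ≤
      ‖xk - xstar‖ ^ 2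
        - 2 * v * ((Lmax ^ (-(1 / p)) * min 1 ((m : ℝ) ^ (1 - 1 / p))) / (m : ℝ))
            * ((∑ i, f i xk) - ∑ i, f i xstar) ^ (1 / p)
        + v ^ 2 := by
  set d : Fin m → ℝ := fun i => f i xk - f i xstar
  set e : Fin m → ℝ := fun i => ⟪g i, xk - xstar⟫
  have hd : ∀ i, 0 ≤ d i := fun i => sub_nonneg.2 (hmin i xk hxk)
  have hgap : (∑ i, f i xk) - ∑ i, f i xstar = ∑ i ∈ I, d i := by
    rw [← sum_sub_distrib, hIdef, sum_filter_of_ne]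
    exact fun i _ hi => lt_of_le_of_ne (hmin i xk hxk) fun h => hi (sub_eq_zero.2 h.symm)
  have hstep : ∀ i ∈ I, ‖next i - xstar‖ ^ 2 ≤ ‖xk - xstar‖ ^ 2 - 2 * v * e i + v ^ 2 :=
    fun i hi => norm_sub_sq_le_of_nearest_point_sub_smul hXconv hxsX (hnext i hi).1
      (hnext i hi).2 (hg i hi)
  have hgrowth : ∀ i ∈ I, Lmax ^ (-(1 / p)) * d i ^ (1 / p) ≤ e i := fun i hi =>
    IsQuasiSubgradient.rpow_le_inner (hgsub i hi) (hg i hi) hL hp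
      (fun y => (le_abs_self _).trans (hHolder i xstar hxsX y))
      (by simpa [hIdef] using hi)
  have hmean := card_div_mul_min_mul_rpow_sum_le_sum_rpow (s := I) (m := m) (one_div_pos.2 hp)
    (fun i _ => hd i) (by exact_mod_cast card_le_univ I |>.trans (Fintype.card_fin m).le)
  have hk : (0 : ℝ) < #I := by exact_mod_cast hIne.card_pos
  rw [hgap, one_div, inv_mul_le_iff₀ hk]
  calc ∑ i ∈ I, ‖next i - xstar‖ ^ 2
      ≤ ∑ i ∈ I, (‖xk - xstar‖ ^ 2 - 2 * v * e i + v ^ 2) := sum_le_sum hstep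
    _ = #I * (‖xk - xstar‖ ^ 2 + v ^ 2) - 2 * v * ∑ i ∈ I, e i := by
      rw [sum_add_distrib, sum_sub_distrib, ← mul_sum, sum_const, sum_const, nsmul_eq_mul,
        nsmul_eq_mul]; ring
    _ ≤ #I * (‖xk - xstar‖ ^ 2 + v ^ 2)
          - 2 * v * ∑ i ∈ I, Lmax ^ (-(1 / p)) * d i ^ (1 / p) := by
      gcongr with i hi; exact hgrowth i hi
    _ ≤ #I * (‖xk - xstar‖ ^ 2 + v ^ 2) - 2 * v * (Lmax ^ (-(1 / p))
          * (#I / m * min 1 ((m : ℝ) ^ (1 - 1 / p)) * (∑ i ∈ I, d i) ^ (1 / p))) := by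
      rw [← mul_sum]; gcongr
    _ = _ := by ring

/-- Basic inequality in conditional expectation for the randomized incremental
subgradient method (Lemma 3.8): the uniform average over the active index set `I`
of the squared distances of the candidate next iterates is the conditional
expectation `E[‖x_{k+1} - x*‖² | F_k]`. -/
theorem stmt15 {n m : ℕ} (hm : 0 < m)
    (f : Fin m → EuclideanSpace ℝ (Fin n) → ℝ)
    (X : Set (EuclideanSpace ℝ (Fin n))) (hXne : X.Nonempty)
    (hXc : IsClosed X) (hXconv : Convex ℝ X)
    (hqc : ∀ i, QuasiconvexOn ℝ Set.univ (f i)) (hcont : ∀ i, Continuous (f i))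
    (p Lmax : ℝ) (hp : 0 < p) (hL : 0 < Lmax)
    (hHolder : ∀ i, ∀ x ∈ X, ∀ y, |f i y - f i x| ≤ Lmax * ‖y - x‖ ^ p)
    (xstar : EuclideanSpace ℝ (Fin n)) (hxsX : xstar ∈ X)
    (hmin : ∀ i, ∀ y ∈ X, f i xstar ≤ f i y)
    (xk : EuclideanSpace ℝ (Fin n)) (hxk : xk ∈ X)
    (v : ℝ) (hv : 0 < v)
    (I : Finset (Fin m))
    (hIdef : I = Finset.univ.filter fun i => f i xstar < f i xk)
    (hIne : I.Nonempty)
    (g : Fin m → EuclideanSpace ℝ (Fin n)) (hg : ∀ i ∈ I, ‖g i‖ = 1)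
    (hgsub : ∀ i ∈ I, ∀ y, f i y < f i xk → (inner ℝ (g i) (y - xk) : ℝ) ≤ 0)
    (next : Fin m → EuclideanSpace ℝ (Fin n))
    (hnext : ∀ i ∈ I, next i ∈ X ∧
      ∀ w ∈ X, ‖next i - (xk - v • g i)‖ ≤ ‖w - (xk - v • g i)‖) :
    (1 / (I.card : ℝ)) * ∑ i ∈ I, ‖next i - xstar‖ ^ 2 ≤
      ‖xk - xstar‖ ^ 2
        - 2 * v * ((Lmax ^ (-(1 / p)) * min 1 ((m : ℝ) ^ (1 - 1 / p))) / (m : ℝ))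
            * ((∑ i, f i xk) - ∑ i, f i xstar) ^ (1 / p)
        + v ^ 2 :=
  stmt15_general f X hXconv p Lmax hp hL hHolder xstar hxsX hmin xk hxk v hv I hIdef hIne g hg hgsub
    next hnext
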